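/- arXiv:2206.06136 — 2 statements merged into one kernel-verified Lean document; each statement's English description precedes it below -/
import Mathlib

section
/- (Lemma 2.4(2), consequence.) For every k ≥ 1, every function in W_k is a term operation of L, i.e., W_k ⊆ Clo_k(L). -/
/-- The natural projection `ZMod 12 → ZMod 4`. -/
def pi4 : ZMod 12 →+* ZMod 4 := ZMod.castHom (show (4:ℕ) ∣ 12 by norm_num) (ZMod 4)

/-- The cocycle `t` of Vaughan–Lee's loop. -/
def t (x y : ZMod 12) : ZMod 12 :=
  if (pi4 x = 1 ∧ pi4 y = 3) ∨ (pi4 x = 3 ∧ pi4 y = 1) then 4 else 0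

/-- The multiplication of Vaughan–Lee's loop `L`. -/
def mulL (x y : ZMod 12) : ZMod 12 := x + y + t x y

/-- `InClo k h` means `h` is a `k`-ary term function of `L`:
`h` lies in the closure of the projections under the pointwise loop operation. -/
inductive InClo (k : ℕ) : ((Fin k → ZMod 12) → ZMod 12) → Prop
  | proj (i : Fin k) : InClo k (fun x => x i)
  | mul {g h : (Fin k → ZMod 12) → ZMod 12} :
      InClo k g → InClo k h → InClo k (fun x => mulL (g x) (h x))

/-- `Wset k` is the set of functions `w : (ZMod 12)^k → ZMod 12` taking values in
`C = {0,4,8}`, vanishing on tuples of even elements, invariant under negation, and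
invariant under translation by tuples from `C` (i.e. factoring through `(ZMod 4)^k`). -/
def Wset (k : ℕ) : Set ((Fin k → ZMod 12) → ZMod 12) :=
  { w |
    (∀ x, w x ∈ ({0, 4, 8} : Set (ZMod 12))) ∧
    (∀ x, (∀ i, Even (x i)) → w x = 0) ∧
    (∀ x, w (-x) = w x) ∧
    (∀ x c, (∀ i, c i ∈ ({0, 4, 8} : Set (ZMod 12))) → w (x + c) = w x) }

/-!
`C = {0, 4, 8}` is the kernel of `pi4` and `t` only sees residues mod 4, so `L` multiplies like
`ZMod 12` as soon as one factor is even; in particular the `C`-valued term functions form an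
additive group. A term function `a ⬝ᵥ x + g` with `C`-valued error `g` can be doubled and shifted
by even linear terms until only `2 g` is left, so `g = 4 g` is itself a term function. Multiplying
two such functions shows that every `x ↦ t (a ⬝ᵥ x) (b ⬝ᵥ x)` is a term function, and so is
`4·[x_i odd ∧ s ⬝ᵥ x̄ = 0]` for every `s ∈ (ZMod 4)^k`, where `x̄` is `x` mod 4. Summing these over
`s` with weight `1` on `s ⬝ᵥ v = 0` and `-1` on `s ⬝ᵥ v = 2` (in `C ≅ ZMod 3`) isolates the
indicator of `x̄ ∈ {v, -v}` when `v_i` is odd, and every `w ∈ W_k` is a combination of these.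
-/

instance : DecidablePred (Odd : ZMod 4 → Prop) :=
  fun _ => inferInstanceAs (Decidable (∃ _, _))

lemma ZMod.mul_self_eq_one_of_odd {p : ZMod 4} (hp : Odd p) : p * p = 1 := by
  revert p; decide

lemma ZMod.eq_one_or_neg_one_of_odd {p : ZMod 4} (hp : Odd p) : p = 1 ∨ p = -1 := by
  revert p; decide

lemma ZMod.even_val_of_not_odd {p : ZMod 4} (hp : ¬Odd p) : Even (p.val : ZMod 12) := by
  revert p; unfold Even; decide

lemma ZMod.not_odd_of_eq_neg {p : ZMod 4} (hp : p = -p) : ¬Odd p := by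
  revert p; decide

lemma ZMod.pi_induction {ι : Type*} [Finite ι] [DecidableEq ι] {n : ℕ} [NeZero n]
    {p : (ι → ZMod n) → Prop} (zero : p 0) (add : ∀ a b, p a → p b → p (a + b))
    (single : ∀ i, p (Pi.single i 1)) (a : ι → ZMod n) : p a := by
  refine Pi.single_induction p a zero add fun i m => ?_
  rw [← ZMod.natCast_zmod_val m]
  induction m.val with
  | zero => simpa using zero
  | succ r ih => simpa [Pi.single_add] using add _ _ ih (single i)

lemma t_eq_ite (a b : ZMod 12) :
    t a b = if Odd (pi4 a) ∧ pi4 a + pi4 b = 0 then 4 else 0 := by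
  unfold t
  generalize pi4 a = p, pi4 b = q
  revert p q
  decide

lemma pi4_t (a b : ZMod 12) : pi4 (t a b) = 0 := by
  rw [t_eq_ite]; split_ifs <;> rfl

lemma t_self (a : ZMod 12) : t a a = 0 := by
  rw [t_eq_ite]; generalize pi4 a = p; revert p; decide

lemma t_eq_zero_of_even (a b : ZMod 12) (h : Even a ∨ Even b) : t a b = 0 := by
  rw [t_eq_ite]
  replace h : Even (pi4 a) ∨ Even (pi4 b) := h.imp (·.map pi4) (·.map pi4)
  revert h; generalize pi4 a = p, pi4 b = q; revert p q; unfold Even; decide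

lemma t_add_of_pi4_eq_zero {a b g h : ZMod 12} (hg : pi4 g = 0) (hh : pi4 h = 0) :
    t (a + g) (b + h) = t a b := by
  simp only [t_eq_ite, map_add, hg, hh, add_zero]

lemma four_mul_of_pi4_eq_zero {z : ZMod 12} (hz : pi4 z = 0) : 4 * z = z := by
  revert z; decide

lemma neg_eq_two_mul_of_pi4_eq_zero {z : ZMod 12} (hz : pi4 z = 0) : -z = 2 * z := by
  revert z; decide

lemma even_of_pi4_eq_zero {z : ZMod 12} (hz : pi4 z = 0) : Even z := by
  revert z; unfold Even; decide

lemma pi4_eq_zero_iff_mem {z : ZMod 12} : pi4 z = 0 ↔ z ∈ ({0, 4, 8} : Set (ZMod 12)) := by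
  simp only [Set.mem_insert_iff, Set.mem_singleton_iff]; revert z; decide

section TermFunctions

variable {k : ℕ}

lemma InClo.congr {f g : (Fin k → ZMod 12) → ZMod 12} (hf : InClo k f) (h : ∀ x, f x = g x) :
    InClo k g :=
  funext h ▸ hf

lemma InClo.add_of_even {f g : (Fin k → ZMod 12) → ZMod 12} (hf : InClo k f) (hg : InClo k g)
    (h : ∀ x, Even (f x) ∨ Even (g x)) : InClo k (fun x => f x + g x) :=
  (hf.mul hg).congr fun x => by rw [mulL, t_eq_zero_of_even _ _ (h x), add_zero]

lemma InClo.two_mul {f : (Fin k → ZMod 12) → ZMod 12} (hf : InClo k f) :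
    InClo k (fun x => 2 * f x) :=
  (hf.mul hf).congr fun x => by rw [mulL, t_self]; ring

lemma InClo.add_two_mul_dotProduct (c : Fin k → ZMod 12) {f : (Fin k → ZMod 12) → ZMod 12}
    (hf : InClo k f) : InClo k (fun x => f x + 2 * (c ⬝ᵥ x)) := by
  induction c using ZMod.pi_induction generalizing f with
  | zero => simpa using hf
  | add a b ha hb => exact (hb (ha hf)).congr fun x => by rw [add_dotProduct]; ring
  | single i =>
    refine (hf.add_of_even (InClo.proj i).two_mul fun x => Or.inr (even_two_mul _)).congr
      fun x => ?_
    rw [single_dotProduct, one_mul]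

lemma InClo.of_dotProduct_add {a : Fin k → ZMod 12} {g : (Fin k → ZMod 12) → ZMod 12}
    (h : InClo k (fun x => a ⬝ᵥ x + g x)) (hg : ∀ x, pi4 (g x) = 0) : InClo k g := by
  have h2g : InClo k (fun x => 2 * g x) :=
    (h.two_mul.add_two_mul_dotProduct (-a)).congr fun x => by rw [neg_dotProduct]; ring
  exact h2g.two_mul.congr fun x => by rw [← mul_assoc]; exact four_mul_of_pi4_eq_zero (hg x)

lemma InClo.zero [NeZero k] : InClo k (fun _ => 0) :=
  InClo.of_dotProduct_add (a := Pi.single 0 1)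
    ((InClo.proj 0).congr fun x => by rw [single_dotProduct, one_mul, add_zero]) fun _ => rfl

lemma InClo.mul_dotProduct_add {a b : Fin k → ZMod 12} {g h : (Fin k → ZMod 12) → ZMod 12}
    (ha : InClo k (fun x => a ⬝ᵥ x + g x)) (hb : InClo k (fun x => b ⬝ᵥ x + h x))
    (hg : ∀ x, pi4 (g x) = 0) (hh : ∀ x, pi4 (h x) = 0) :
    InClo k (fun x => (a + b) ⬝ᵥ x + (g x + h x + t (a ⬝ᵥ x) (b ⬝ᵥ x))) :=
  (ha.mul hb).congr fun x => by
    rw [mulL, t_add_of_pi4_eq_zero (hg x) (hh x), add_dotProduct]; ring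

end TermFunctions

section CValued

variable {k : ℕ} [NeZero k]

variable (k) in
def cValuedClo : AddSubgroup ((Fin k → ZMod 12) → ZMod 12) where
  carrier := {f | InClo k f ∧ ∀ x, pi4 (f x) = 0}
  zero_mem' := ⟨InClo.zero, fun _ => map_zero pi4⟩
  add_mem' hf hg :=
    ⟨hf.1.add_of_even hg.1 fun x => .inl (even_of_pi4_eq_zero (hf.2 x)),
      fun x => by simp [hf.2 x, hg.2 x]⟩
  neg_mem' hf :=
    ⟨hf.1.two_mul.congr fun x => (neg_eq_two_mul_of_pi4_eq_zero (hf.2 x)).symm,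
      fun x => by simp [hf.2 x]⟩

lemma const_mul_mem_cValuedClo (c : ZMod 12) {f : (Fin k → ZMod 12) → ZMod 12}
    (hf : f ∈ cValuedClo k) : (fun x => c * f x) ∈ cValuedClo k := by
  convert nsmul_mem hf c.val using 1
  funext x
  rw [Pi.smul_apply, nsmul_eq_mul, ZMod.natCast_zmod_val]

def IsLinRealizable (a : Fin k → ZMod 12) : Prop :=
  ∃ g : (Fin k → ZMod 12) → ZMod 12, (∀ x, pi4 (g x) = 0) ∧ InClo k (fun x => a ⬝ᵥ x + g x)

lemma isLinRealizable (a : Fin k → ZMod 12) : IsLinRealizable a := by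
  induction a using ZMod.pi_induction with
  | zero => exact ⟨fun _ => 0, fun _ => rfl, InClo.zero.congr fun x => by simp⟩
  | add a b ha hb =>
    obtain ⟨g, hg, ha⟩ := ha
    obtain ⟨h, hh, hb⟩ := hb
    exact ⟨_, fun x => by simp [hg x, hh x, pi4_t], ha.mul_dotProduct_add hb hg hh⟩
  | single i =>
    exact ⟨fun _ => 0, fun _ => rfl, (InClo.proj i).congr fun x => by simp [single_dotProduct]⟩

lemma t_dotProduct_mem_cValuedClo (a b : Fin k → ZMod 12) :
    (fun x => t (a ⬝ᵥ x) (b ⬝ᵥ x)) ∈ cValuedClo k := by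
  obtain ⟨g, hg, ha⟩ := isLinRealizable a
  obtain ⟨h, hh, hb⟩ := isLinRealizable b
  have hpi (x : Fin k → ZMod 12) : pi4 (g x + h x + t (a ⬝ᵥ x) (b ⬝ᵥ x)) = 0 := by
    simp [hg x, hh x, pi4_t]
  have hgh : (fun x => g x + h x + t (a ⬝ᵥ x) (b ⬝ᵥ x)) ∈ cValuedClo k :=
    ⟨(ha.mul_dotProduct_add hb hg hh).of_dotProduct_add hpi, hpi⟩
  convert sub_mem (sub_mem hgh ⟨ha.of_dotProduct_add hg, hg⟩) ⟨hb.of_dotProduct_add hh, hh⟩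
    using 1
  funext x
  simp only [Pi.sub_apply]
  ring

end CValued

section Counting

open Finset

variable {k : ℕ} {i : Fin k} {v y : Fin k → ZMod 4}

lemma card_filter_dotProduct_eq_zero (hv : Odd (v i)) :
    #{s : Fin k → ZMod 4 | s ⬝ᵥ v = 0} = 4 ^ (k - 1) := by
  have hfiber (j : ZMod 4) : #{s : Fin k → ZMod 4 | s ⬝ᵥ v = j} = #{s | s ⬝ᵥ v = 0} := by
    refine (card_equiv (Equiv.addRight (Pi.single i (j * v i))) fun s => ?_).symm
    simp [add_dotProduct, single_dotProduct, mul_assoc, ZMod.mul_self_eq_one_of_odd hv]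
  have hcard : 4 ^ k = 4 * #{s : Fin k → ZMod 4 | s ⬝ᵥ v = 0} := by
    have := card_eq_sum_card_fiberwise (f := (· ⬝ᵥ v)) (s := univ) (t := univ) (by simp)
    simpa [hfiber] using this
  have h4 : 4 ^ k = 4 * 4 ^ (k - 1) := by rw [← pow_succ', Nat.sub_add_cancel i.pos]
  omega

lemma exists_dotProduct_eq_two (hv : Odd (v i)) (hy : Odd (y i)) (hvy : v ≠ y) (hvy' : v ≠ -y) :
    ∃ s, s ⬝ᵥ y = 0 ∧ s ⬝ᵥ v = 2 := by
  by_contra! h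
  have hperp (s : Fin k → ZMod 4) (hs : s ⬝ᵥ y = 0) : s ⬝ᵥ v = 0 := by
    have h1 := h s hs
    have h2 := h (2 • s) (by rw [smul_dotProduct, hs, smul_zero])
    rw [smul_dotProduct] at h2
    revert h1 h2
    generalize s ⬝ᵥ v = p
    revert p
    decide
  have hprop (j : Fin k) : v j = (y i * v i) * y j := by
    have := hperp (Pi.single j (y i) - Pi.single i (y j))
      (by simp [sub_dotProduct, single_dotProduct, mul_comm])
    rw [sub_dotProduct, single_dotProduct, single_dotProduct, sub_eq_zero] at this
    linear_combination (y i) * this - v j * ZMod.mul_self_eq_one_of_odd hy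
  rcases ZMod.eq_one_or_neg_one_of_odd (hy.mul hv) with hc | hc
  · exact hvy (funext fun j => by rw [hprop j, hc, one_mul])
  · exact hvy' (funext fun j => by rw [hprop j, hc, Pi.neg_apply, neg_one_mul])

/-- Under `C ≅ ZMod 3` this is `1` at `0` and `-1` at `2`, so it sums to zero over the subgroups
`{0, 2}` and `ZMod 4` of `ZMod 4` and to one over `{0}`. -/
def weight (j : ZMod 4) : ZMod 12 := if j = 0 then 4 else if j = 2 then 8 else 0

lemma weight_add_two (j : ZMod 4) : weight (j + 2) = 2 * weight j := by
  revert j; decide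

lemma weight_mul_four (j : ZMod 4) : weight j * 4 = weight j := by
  revert j; decide

lemma four_pow_mul_four (n : ℕ) : (4 : ZMod 12) ^ n * 4 = 4 := by
  induction n with
  | zero => simp
  | succ n ih => rw [pow_succ, mul_assoc, show (4 : ZMod 12) * 4 = 4 by decide, ih]

lemma sum_weight_dotProduct (hv : Odd (v i)) (hy : Odd (y i)) :
    ∑ s : Fin k → ZMod 4, (if s ⬝ᵥ y = 0 then weight (s ⬝ᵥ v) else 0) =
      if v = y ∨ v = -y then 4 else 0 := by
  split_ifs with hvy
  · have hs (s : Fin k → ZMod 4) :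
        (if s ⬝ᵥ y = 0 then weight (s ⬝ᵥ v) else 0) = if s ⬝ᵥ v = 0 then 4 else 0 := by
      have : s ⬝ᵥ y = 0 ↔ s ⬝ᵥ v = 0 := by
        rcases hvy with rfl | rfl <;> simp [dotProduct_neg]
      by_cases h : s ⬝ᵥ v = 0 <;> simp [this, h, weight]
    rw [Fintype.sum_congr _ _ hs, sum_ite, sum_const_zero, add_zero, sum_const,
      card_filter_dotProduct_eq_zero hv, nsmul_eq_mul, Nat.cast_pow]
    exact four_pow_mul_four _
  · rw [not_or] at hvy
    obtain ⟨d, hdy, hdv⟩ := exists_dotProduct_eq_two hv hy hvy.1 hvy.2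
    set f : (Fin k → ZMod 4) → ZMod 12 := fun s => if s ⬝ᵥ y = 0 then weight (s ⬝ᵥ v) else 0
    have hS : ∑ s, f s = 2 * ∑ s, f s := by
      rw [mul_sum, ← Equiv.sum_comp (Equiv.addRight d) f]
      refine Fintype.sum_congr _ _ fun s => ?_
      simp only [f, Equiv.coe_addRight, add_dotProduct, hdy, hdv, add_zero, weight_add_two,
        mul_ite, mul_zero]
    linear_combination -hS

end Counting

section Indicators

variable {k : ℕ}

def liftVec (v : Fin k → ZMod 4) : Fin k → ZMod 12 := fun i => ((v i).val : ZMod 12)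

lemma pi4_comp_liftVec (v : Fin k → ZMod 4) : pi4 ∘ liftVec v = v :=
  funext fun i => by simp [liftVec]

lemma oddDot_mem_cValuedClo [NeZero k] (i : Fin k) (s : Fin k → ZMod 4) :
    (fun x => if Odd (pi4 (x i)) ∧ s ⬝ᵥ (pi4 ∘ x) = 0 then 4 else 0) ∈ cValuedClo k := by
  convert t_dotProduct_mem_cValuedClo (Pi.single i 1) (liftVec s - Pi.single i 1) using 2 with x
  rw [t_eq_ite, sub_dotProduct, single_dotProduct, one_mul, map_sub, RingHom.map_dotProduct,
    pi4_comp_liftVec, add_sub_cancel]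

def pmIndicator (v : Fin k → ZMod 4) (x : Fin k → ZMod 12) : ZMod 12 :=
  if v = pi4 ∘ x ∨ v = -(pi4 ∘ x) then 4 else 0

lemma pmIndicator_mem_cValuedClo [NeZero k] {v : Fin k → ZMod 4} {i : Fin k} (hv : Odd (v i)) :
    pmIndicator v ∈ cValuedClo k := by
  convert sum_mem fun s _ => const_mul_mem_cValuedClo (weight (s ⬝ᵥ v)) (oddDot_mem_cValuedClo i s)
    using 1
  funext x
  rw [Finset.sum_apply, pmIndicator]
  by_cases hx : Odd (pi4 (x i))
  · rw [← sum_weight_dotProduct hv hx]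
    refine Fintype.sum_congr _ _ fun s => ?_
    simp only [hx, true_and, mul_ite, mul_zero, weight_mul_four]
  · have hvx : ¬(v = pi4 ∘ x ∨ v = -(pi4 ∘ x)) := by
      rintro (rfl | rfl)
      · exact hx hv
      · exact hx (by simpa using hv.neg)
    simp [hvx, hx]

end Indicators

section Wset

variable {k : ℕ} {w : (Fin k → ZMod 12) → ZMod 12}

lemma apply_eq_of_mem_Wset (hw : w ∈ Wset k) {x x' : Fin k → ZMod 12}
    (h : pi4 ∘ x = pi4 ∘ x') : w x = w x' := by
  have hc (i : Fin k) : (x' - x) i ∈ ({0, 4, 8} : Set (ZMod 12)) := by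
    rw [← pi4_eq_zero_iff_mem, Pi.sub_apply, map_sub, sub_eq_zero]
    exact (congrFun h i).symm
  simpa using (hw.2.2.2 x (x' - x) hc).symm

lemma apply_liftVec_eq_zero_of_mem_Wset (hw : w ∈ Wset k) {v : Fin k → ZMod 4}
    (hv : ∀ i, ¬Odd (v i)) : w (liftVec v) = 0 :=
  hw.2.1 _ fun i => ZMod.even_val_of_not_odd (hv i)

/-- A residue `y ≠ -y` is picked up by both `v = y` and `v = -y`, and `2 * 4 * 2 = 16` acts as the
identity on `C`. -/
lemma eq_sum_pmIndicator_of_mem_Wset (hw : w ∈ Wset k) :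
    w = ∑ v, fun x => 2 * w (liftVec v) * pmIndicator v x := by
  funext x
  simp only [Finset.sum_apply, pmIndicator, mul_ite, mul_zero]
  set y := pi4 ∘ x
  have hx : w x = w (liftVec y) := apply_eq_of_mem_Wset hw (pi4_comp_liftVec y).symm
  have hmem (v : Fin k → ZMod 4) : (v = y ∨ v = -y) ↔ v ∈ ({y, -y} : Finset _) := by
    rw [Finset.mem_insert, Finset.mem_singleton]
  simp_rw [hmem, Finset.sum_ite_mem_eq]
  by_cases hy : y = -y
  · rw [← hy, Finset.pair_eq_singleton, Finset.sum_singleton, hx,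
      apply_liftVec_eq_zero_of_mem_Wset hw fun i => ZMod.not_odd_of_eq_neg (congrFun hy i)]
    ring
  · have hneg : w (liftVec (-y)) = w (liftVec y) := by
      rw [← hw.2.2.1 (liftVec y)]
      exact apply_eq_of_mem_Wset hw (by simp [pi4_comp_liftVec, ← Function.comp_def])
    rw [Finset.sum_pair hy, hneg, hx]
    linear_combination -5 * four_mul_of_pi4_eq_zero (pi4_eq_zero_iff_mem.2 (hw.1 (liftVec y)))

end Wset

theorem stmt_11 (k : ℕ) (hk : 1 ≤ k) :
    ∀ w ∈ Wset k, InClo k w := by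
  have : NeZero k := ⟨by omega⟩
  intro w hw
  refine (show w ∈ cValuedClo k from ?_).1
  rw [eq_sum_pmIndicator_of_mem_Wset hw]
  refine sum_mem fun v _ => ?_
  by_cases hv : ∃ i, Odd (v i)
  · obtain ⟨i, hi⟩ := hv
    exact const_mul_mem_cValuedClo _ (pmIndicator_mem_cValuedClo hi)
  · simp only [not_exists] at hv
    simp only [apply_liftVec_eq_zero_of_mem_Wset hw hv, mul_zero, zero_mul]
    exact zero_mem _
end

section
/- (Content of Theorem 3: reduction of subpower membership for L to linear algebra over ZMod 12.) Let n, k ≥ 1 and let a : Fin k → (Fin n → ZMod 12). Call an index i ∈ Fin n odd if a s i is odd for some s ∈ Fin k. For each odd index i define b_i : Fin n → ZMod 12 by b_i j = 4 if either a s j − a s i ∈ {0,4,8} for every s, or a s j + a s i ∈ {0,4,8} for every s, and b_i j = 0 otherwise. Then the closure of the set {a 0, …, a (k−1)} under the coordinatewise loop operation of L (i.e., the subsemigroup of (Fin n → ZMod 12) with pointwise operation * generated by these tuples) equals, as a set, the additive subgroup of Fin n → ZMod 12 generated by {a 0, …, a (k−1)} ∪ {b_i : i an odd index}. -/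
/-- `InGenL n S v` means the tuple `v` lies in the closure of the set `S` of tuples
under the coordinatewise loop operation of `L`. -/
inductive InGenL (n : ℕ) (S : Set (Fin n → ZMod 12)) : (Fin n → ZMod 12) → Prop
  | base {v} : v ∈ S → InGenL n S v
  | mul {u v} : InGenL n S u → InGenL n S v → InGenL n S (fun j => mulL (u j) (v j))

/-! ### Scalar-level decidable facts -/

instance : DecidablePred (Odd : ZMod 12 → Prop) := fun x =>
  decidable_of_iff (∃ m : ZMod 12, x = m + m + 1)
    (by unfold Odd; constructor <;> rintro ⟨m, hm⟩ <;> exact ⟨m, by rw [hm]; ring⟩)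

/-! ### The key finite identity over `ZMod 4 × ZMod 4` -/

def Pc (x y : ZMod 4) : Prop := (x = 1 ∧ y = 3) ∨ (x = 3 ∧ y = 1)

instance : ∀ x y, Decidable (Pc x y) := fun x y => by unfold Pc; infer_instance

def pfun (x y : ZMod 4) : ZMod 12 := if Pc x y then 4 else 0

def wt (x y : ZMod 4) : ℕ :=
  2 * ((if Pc x y then 1 else 0) + (if x = 1 ∧ y = 1 then 1 else 0))

def g (z z' : ZMod 4 × ZMod 4) : ZMod 12 := wt z.1 z'.1 • pfun z.2 z'.2

def Hse (s e : ZMod 4) : Finset (ZMod 4 × ZMod 4) :=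
  Finset.image (fun p : ZMod 4 × ZMod 4 => (p.1, p.1 * s + p.2 * e)) Finset.univ

set_option maxRecDepth 100000 in
theorem keyid : ∀ s e : ZMod 4,
    (∑ z ∈ Hse s e, ∑ z' ∈ Hse s e, g z z') =
      if ((∀ z ∈ Hse s e, z.2 = z.1) ∨ (∀ z ∈ Hse s e, z.2 = -z.1)) then 4 else 0 := by
  decide

theorem subgroup_struct (H : AddSubgroup (ZMod 4 × ZMod 4)) (s : ZMod 4) (hs : (1, s) ∈ H) :
    ∃ e : ZMod 4, ∀ z, z ∈ H ↔ z ∈ Hse s e := by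
  have hsc : ∀ r : ZMod 4, (r, r * s) ∈ H := by
    intro r
    have h1 : (r.val • ((1 : ZMod 4), s)) ∈ H := H.nsmul_mem hs r.val
    have h2 : (r.val • ((1 : ZMod 4), s)) = (r, r * s) := by
      have hv : ((r.val : ℕ) : ZMod 4) = r := ZMod.natCast_rightInverse r
      ext
      · simp [nsmul_eq_mul, hv]
      · simp [nsmul_eq_mul, hv]
    rwa [h2] at h1
  have hzero : ∀ (z : ZMod 4 × ZMod 4), z ∈ H → (0, z.2 - z.1 * s) ∈ H := by
    intro z hz
    have h := H.sub_mem hz (hsc z.1)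
    have he : z - (z.1, z.1 * s) = (0, z.2 - z.1 * s) := by
      ext <;> simp
    rwa [he] at h
  have hmemHse : ∀ (s' e : ZMod 4) (x y : ZMod 4), ((x, y) ∈ Hse s' e ↔ ∃ w, y = x * s' + w * e) := by
    intro s' e x y
    constructor
    · intro h
      simp only [Hse, Finset.mem_image, Finset.mem_univ, true_and] at h
      obtain ⟨p, hp⟩ := h
      refine ⟨p.2, ?_⟩
      have h1 : p.1 = x := congrArg Prod.fst hp
      have h2 : p.1 * s' + p.2 * e = y := congrArg Prod.snd hp
      rw [← h2, h1]
    · rintro ⟨w, hw⟩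
      simp only [Hse, Finset.mem_image, Finset.mem_univ, true_and]
      exact ⟨(x, w), by simp [hw]⟩
  by_cases h1 : ((0:ZMod 4), (1:ZMod 4)) ∈ H ∨ ((0:ZMod 4), (3:ZMod 4)) ∈ H
  · have h01 : ((0:ZMod 4), (1:ZMod 4)) ∈ H := by
      rcases h1 with h | h
      · exact h
      · have := H.add_mem (H.add_mem h h) h
        norm_num at this
        convert this using 2 <;> decide
    refine ⟨1, fun z => ?_⟩
    obtain ⟨x, y⟩ := z
    rw [hmemHse]
    constructor
    · intro _; exact ⟨y - x * s, by ring⟩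
    · rintro ⟨w, hw⟩
      have hw1 : ((0:ZMod 4), w) ∈ H := by
        have h2 : (w.val • ((0:ZMod 4), (1:ZMod 4))) ∈ H := H.nsmul_mem h01 w.val
        have hv : ((w.val : ℕ) : ZMod 4) = w := ZMod.natCast_rightInverse w
        have : (w.val • ((0:ZMod 4), (1:ZMod 4))) = (0, w) := by
          ext <;> simp [nsmul_eq_mul, hv]
        rwa [this] at h2
      have := H.add_mem (hsc x) hw1
      have he : ((x, x * s) + (0, w)) = (x, y) := by
        ext <;> simp [hw] <;> ring
      rwa [he] at this
  · push_neg at h1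
    by_cases h2 : ((0:ZMod 4), (2:ZMod 4)) ∈ H
    · refine ⟨2, fun z => ?_⟩
      obtain ⟨x, y⟩ := z
      rw [hmemHse]
      constructor
      · intro hz
        have hv := hzero (x, y) hz
        have hcase : ∀ v : ZMod 4, v = 0 ∨ v = 1 ∨ v = 2 ∨ v = 3 := by decide
        rcases hcase (y - x * s) with h | h | h | h
        · exact ⟨0, by rw [← sub_eq_zero]; simpa using h⟩
        · exact absurd (h ▸ hv) h1.1
        · exact ⟨1, by have : y - x*s = 2 := h; linear_combination this⟩
        · exact absurd (h ▸ hv) h1.2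
      · rintro ⟨w, hw⟩
        have hw2 : ((0:ZMod 4), w * 2) ∈ H := by
          have hcase : ∀ w : ZMod 4, w * 2 = 0 ∨ w * 2 = 2 := by decide
          rcases hcase w with h | h
          · rw [h]; exact H.zero_mem
          · rw [h]; exact h2
        have := H.add_mem (hsc x) hw2
        have he : ((x, x * s) + (0, w * 2)) = (x, y) := by
          ext <;> simp [hw] <;> ring
        rwa [he] at this
    · refine ⟨0, fun z => ?_⟩
      obtain ⟨x, y⟩ := z
      rw [hmemHse]
      constructor
      · intro hz
        have hv := hzero (x, y) hz
        have hcase : ∀ v : ZMod 4, v = 0 ∨ v = 1 ∨ v = 2 ∨ v = 3 := by decide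
        rcases hcase (y - x * s) with h | h | h | h
        · exact ⟨0, by rw [← sub_eq_zero]; simpa using h⟩
        · exact absurd (h ▸ hv) h1.1
        · exact absurd (h ▸ hv) h2
        · exact absurd (h ▸ hv) h1.2
      · rintro ⟨w, hw⟩
        have he : (x, y) = (x, x * s) := by
          ext <;> simp [hw]
        rw [he]; exact hsc x

/-! ### The scalar counting identity -/

def dot {k : ℕ} (l c : Fin k → ZMod 4) : ZMod 4 := ∑ s, l s * c s

theorem dot_add_left {k : ℕ} (l m c : Fin k → ZMod 4) : dot (l + m) c = dot l c + dot m c := by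
  unfold dot
  rw [← Finset.sum_add_distrib]
  exact Finset.sum_congr rfl fun s _ => by simp [add_mul]

theorem dot_single {k : ℕ} (s0 : Fin k) (r : ZMod 4) (c : Fin k → ZMod 4) :
    dot (Pi.single s0 r) c = r * c s0 := by
  unfold dot
  rw [Finset.sum_eq_single s0]
  · simp
  · intro s _ hs; simp [Pi.single_eq_of_ne hs]
  · intro h; exact absurd (Finset.mem_univ s0) h

theorem dot_neg_right {k : ℕ} (l c : Fin k → ZMod 4) : dot l (-c) = - dot l c := by
  unfold dot
  simp [mul_neg]

theorem pfun3 : ∀ x y : ZMod 4, 3 * pfun x y = 0 := by decide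

theorem g3 (z z' : ZMod 4 × ZMod 4) : 3 * g z z' = 0 := by
  unfold g
  rw [mul_smul_comm, pfun3, smul_zero]

theorem scalar_id {k : ℕ} (c d : Fin k → ZMod 4) (hc : ∃ s, c s = 1 ∨ c s = 3) :
    (∑ l : Fin k → ZMod 4, ∑ m : Fin k → ZMod 4, g (dot l c, dot l d) (dot m c, dot m d))
      = if (d = c ∨ d = -c) then (4:ZMod 12) else 0 := by
  classical
  set Φ : (Fin k → ZMod 4) → (ZMod 4 × ZMod 4) := fun l => (dot l c, dot l d) with hΦ
  have Φadd : ∀ l m, Φ (l + m) = Φ l + Φ m := by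
    intro l m
    simp only [hΦ, dot_add_left, Prod.mk_add_mk]
  let Φhom : (Fin k → ZMod 4) →+ (ZMod 4 × ZMod 4) := AddMonoidHom.mk' Φ Φadd
  have hΦhom : ∀ l, Φhom l = Φ l := fun l => rfl
  set Him : Finset (ZMod 4 × ZMod 4) := Finset.univ.image Φ with hHim
  set N : ℕ := (Finset.univ.filter (fun l => Φ l = 0)).card with hN
  -- all fibers over the image have cardinality N
  have hfib : ∀ z ∈ Him, (Finset.univ.filter (fun l => Φ l = z)).card = N := by
    intro z hz
    rw [hHim, Finset.mem_image] at hz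
    obtain ⟨l₀, _, hl₀⟩ := hz
    rw [hN]
    apply Finset.card_bij' (fun l _ => l - l₀) (fun l _ => l + l₀)
    · intro l hl
      simp only [Finset.mem_filter, Finset.mem_univ, true_and] at hl ⊢
      rw [← hΦhom, map_sub, hΦhom, hΦhom, hl, hl₀, sub_self]
    · intro l hl
      simp only [Finset.mem_filter, Finset.mem_univ, true_and] at hl ⊢
      rw [← hΦhom, map_add, hΦhom, hΦhom, hl, hl₀, zero_add]
    · intro l _; simp
    · intro l _; simp
  -- N is coprime to 3
  have hNdvd : N ∣ 4 ^ k := by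
    have hcard : (Finset.univ : Finset (Fin k → ZMod 4)).card = 4 ^ k := by
      rw [Finset.card_univ]
      rw [Fintype.card_fun]
      simp
    have h2 : (Finset.univ : Finset (Fin k → ZMod 4)).card
        = ∑ z ∈ Him, (Finset.univ.filter (fun l => Φ l = z)).card := by
      rw [hHim]
      exact Finset.card_eq_sum_card_image Φ Finset.univ
    rw [hcard] at h2
    rw [Finset.sum_congr rfl hfib, Finset.sum_const, smul_eq_mul] at h2
    exact ⟨Him.card, by rw [h2]; ring⟩
  have hN3 : (N * N) % 3 = 1 := by
    have h3 : ¬ (3 ∣ N) := by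
      intro h
      have : (3:ℕ) ∣ 4 ^ k := dvd_trans h hNdvd
      have := (Nat.Prime.dvd_of_dvd_pow (p := 3) (by norm_num) this)
      omega
    have h4 : N % 3 = 1 ∨ N % 3 = 2 := by omega
    rcases h4 with h | h <;> rw [Nat.mul_mod, h] <;> rfl
  have hNNsmul : ∀ x : ZMod 12, 3 * x = 0 → (N * N) • x = x := by
    intro x hx
    have h5 : N * N = 3 * ((N*N)/3) + 1 := by omega
    rw [h5, add_smul, one_smul, mul_comm 3, mul_smul]
    have h3x : (3:ℕ) • x = 0 := by rw [nsmul_eq_mul]; push_cast; exact hx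
    rw [h3x, smul_zero, zero_add]
  -- collapse the double sum to the image
  have hsum1 : ∀ G : (ZMod 4 × ZMod 4) → ZMod 12,
      (∑ l : Fin k → ZMod 4, G (Φ l)) = ∑ z ∈ Him, N • G z := by
    intro G
    rw [Finset.sum_comp G Φ]
    exact Finset.sum_congr rfl fun z hz => by rw [hfib z hz]
  have hmain : (∑ l : Fin k → ZMod 4, ∑ m : Fin k → ZMod 4,
        g (dot l c, dot l d) (dot m c, dot m d))
      = ∑ z ∈ Him, ∑ z' ∈ Him, g z z' := by
    have step1 : (∑ l : Fin k → ZMod 4, ∑ m : Fin k → ZMod 4,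
          g (dot l c, dot l d) (dot m c, dot m d))
        = ∑ l : Fin k → ZMod 4, ∑ z' ∈ Him, N • g (Φ l) z' := by
      exact Finset.sum_congr rfl fun l _ => hsum1 (fun z' => g (Φ l) z')
    rw [step1, Finset.sum_comm]
    have step2 : ∀ z' ∈ Him, (∑ l : Fin k → ZMod 4, N • g (Φ l) z')
        = ∑ z ∈ Him, N • (N • g z z') := by
      intro z' _
      exact hsum1 (fun z => N • g z z')
    rw [Finset.sum_congr rfl step2, Finset.sum_comm]
    refine Finset.sum_congr rfl fun z _ => Finset.sum_congr rfl fun z' _ => ?_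
    rw [← mul_smul]
    exact hNNsmul _ (g3 z z')
  rw [hmain]
  -- structure of the image
  obtain ⟨s0, hs0⟩ := hc
  have hdot1 : dot (Pi.single s0 (c s0)) c = 1 := by
    rw [dot_single]
    rcases hs0 with h | h <;> rw [h] <;> decide
  set sv : ZMod 4 := dot (Pi.single s0 (c s0)) d with hsv
  have hmem1 : ((1:ZMod 4), sv) ∈ Φhom.range := ⟨Pi.single s0 (c s0), by
    rw [hΦhom, hΦ]; simp only [hdot1, hsv]⟩
  obtain ⟨e, he⟩ := subgroup_struct Φhom.range sv hmem1
  have himeq : Him = Hse sv e := by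
    ext z
    rw [hHim, Finset.mem_image, ← he z]
    constructor
    · rintro ⟨l, _, hl⟩; exact ⟨l, hl⟩
    · rintro ⟨l, hl⟩; exact ⟨l, Finset.mem_univ l, hl⟩
  rw [himeq]
  rw [keyid sv e]
  -- translate the condition
  refine if_congr ?_ rfl rfl
  have hforward : ∀ l : Fin k → ZMod 4, ((dot l c, dot l d) : ZMod 4 × ZMod 4) ∈ Hse sv e := by
    intro l
    rw [← he]
    exact ⟨l, rfl⟩
  constructor
  · rintro (h | h)
    · left
      funext s
      have := h _ (hforward (Pi.single s 1))
      simpa [dot_single] using this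
    · right
      funext s
      have := h _ (hforward (Pi.single s 1))
      simp only [dot_single, one_mul] at this
      simp [this]
  · rintro (h | h)
    · left
      intro z hz
      rw [← he] at hz
      obtain ⟨l, hl⟩ := hz
      rw [hΦhom, hΦ] at hl
      rw [← hl]
      simp only [h]
    · right
      intro z hz
      rw [← he] at hz
      obtain ⟨l, hl⟩ := hz
      rw [hΦhom, hΦ] at hl
      rw [← hl]
      simp only [h, dot_neg_right]

/-! ### Loop powers and closure properties -/

def pw : ℕ → ZMod 12 → ZMod 12
  | 0, x => x
  | m+1, x => mulL x (pw m x)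

theorem pw11_eq : ∀ x : ZMod 12, pw 11 x = 0 := by decide
theorem pw8_eq : ∀ x : ZMod 12, pw 3 (pw 1 x) = 8 * x := by decide
theorem pi4_mulL : ∀ x y : ZMod 12, pi4 (mulL x y) = pi4 x + pi4 y := by decide
theorem mulL_of_pi4_right : ∀ x y : ZMod 12, pi4 y = 0 → mulL x y = x + y := by decide
theorem pi4_zero_iff : ∀ x : ZMod 12, pi4 x = 0 ↔ 3 * x = 0 := by decide
theorem neg_of_pi4 : ∀ x : ZMod 12, pi4 x = 0 → -x = x + x := by decide
theorem t_decomp : ∀ x y : ZMod 12, t x y = 4 * mulL x y + (-(4*x)) + (-(4*y)) := by decide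
theorem add_decomp : ∀ x y : ZMod 12, x + y = mulL x y + (-(t x y)) := by decide
theorem pi4_8 : ∀ x : ZMod 12, pi4 (8 * x) = 0 := by decide
theorem four_eq : ∀ x : ZMod 12, 8 * x + 8 * x = 4 * x := by decide
theorem odd_iff_pi4 : ∀ x : ZMod 12, Odd x ↔ (pi4 x = 1 ∨ pi4 x = 3) := by decide
theorem mem048_iff : ∀ x : ZMod 12, x ∈ ({0, 4, 8} : Set (ZMod 12)) ↔ pi4 x = 0 := by
  intro x
  show (x = 0 ∨ x = 4 ∨ x = 8) ↔ _
  revert x; decide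
theorem pi4_pw (m : ℕ) (x : ZMod 12) : pi4 (pw m x) = ((m+1 : ℕ) : ZMod 4) * pi4 x := by
  induction m with
  | zero => simp [pw]
  | succ m ih =>
    show pi4 (mulL x (pw m x)) = _
    rw [pi4_mulL, ih]
    push_cast
    ring

section loopside

variable {n : ℕ} {S : Set (Fin n → ZMod 12)}

theorem pw_mem {u : Fin n → ZMod 12} (h : InGenL n S u) (m : ℕ) :
    InGenL n S (fun j => pw m (u j)) := by
  induction m with
  | zero => exact h
  | succ m ih => exact InGenL.mul h ih

theorem zero_mem' {u : Fin n → ZMod 12} (h : InGenL n S u) : InGenL n S 0 := by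
  have h2 := pw_mem h 11
  have : (fun j => pw 11 (u j)) = (0 : Fin n → ZMod 12) := funext fun j => pw11_eq _
  rwa [this] at h2

/-- `memW w` : `w` lies in the closure and all its entries are in `{0,4,8}`. -/
def memW (n : ℕ) (S : Set (Fin n → ZMod 12)) (w : Fin n → ZMod 12) : Prop :=
  InGenL n S w ∧ ∀ j, pi4 (w j) = 0

theorem addW {u w : Fin n → ZMod 12} (hu : InGenL n S u) (hw : memW n S w) :
    InGenL n S (u + w) := by
  have h := InGenL.mul hu hw.1
  have he : (fun j => mulL (u j) (w j)) = u + w :=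
    funext fun j => mulL_of_pi4_right _ _ (hw.2 j)
  rwa [he] at h

theorem memW_add {w w' : Fin n → ZMod 12} (h : memW n S w) (h' : memW n S w') :
    memW n S (w + w') :=
  ⟨addW h.1 h', fun j => by
    show pi4 (w j + w' j) = 0
    rw [map_add, h.2 j, h'.2 j, add_zero]⟩

theorem memW_neg {w : Fin n → ZMod 12} (h : memW n S w) : memW n S (-w) := by
  have he : -w = w + w := funext fun j => neg_of_pi4 _ (h.2 j)
  rw [he]
  exact memW_add h h

theorem memW_zero {u : Fin n → ZMod 12} (hu : InGenL n S u) : memW n S 0 :=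
  ⟨zero_mem' hu, fun j => by simp⟩

theorem memW_nsmul {w : Fin n → ZMod 12} (h : memW n S w) (m : ℕ) : memW n S (m • w) := by
  induction m with
  | zero => simpa using memW_zero h.1
  | succ m ih =>
    rw [succ_nsmul]
    exact memW_add ih h

theorem memW_4smul {u : Fin n → ZMod 12} (hu : InGenL n S u) :
    memW n S (fun j => 4 * u j) := by
  have h8 : InGenL n S (fun j => 8 * u j) := by
    have h := pw_mem (pw_mem hu 1) 3
    have he : (fun j => pw 3 ((fun j' => pw 1 (u j')) j)) = (fun j => 8 * u j) :=
      funext fun j => pw8_eq _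
    rwa [he] at h
  have h8W : memW n S (fun j => 8 * u j) := ⟨h8, fun j => pi4_8 _⟩
  have := memW_add h8W h8W
  have he : ((fun j => 8 * u j) + fun j => 8 * u j) = (fun j => 4 * u j) :=
    funext fun j => four_eq _
  rwa [he] at this

/-- The vector of cocycle values. -/
def tvec {n : ℕ} (u v : Fin n → ZMod 12) : Fin n → ZMod 12 := fun j => t (u j) (v j)

theorem memW_tvec {u v : Fin n → ZMod 12} (hu : InGenL n S u) (hv : InGenL n S v) :
    memW n S (tvec u v) := by
  have h1 := memW_4smul (InGenL.mul hu hv)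
  have h2 := memW_neg (memW_4smul hu)
  have h3 := memW_neg (memW_4smul hv)
  have h := memW_add (memW_add h1 h2) h3
  have he : ((fun j => 4 * mulL (u j) (v j)) + -(fun j => 4 * u j) + -(fun j => 4 * v j))
      = tvec u v := funext fun j => (t_decomp (u j) (v j)).symm
  rwa [he] at h

theorem add_mem' {u v : Fin n → ZMod 12} (hu : InGenL n S u) (hv : InGenL n S v) :
    InGenL n S (u + v) := by
  have h := addW (InGenL.mul hu hv) (memW_neg (memW_tvec hu hv))
  have he : ((fun j => mulL (u j) (v j)) + -(tvec u v)) = u + v := by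
    funext j
    show mulL (u j) (v j) + -(t (u j) (v j)) = u j + v j
    exact (add_decomp (u j) (v j)).symm
  rwa [he] at h

theorem nsmul_mem' {u : Fin n → ZMod 12} (hu : InGenL n S u) (m : ℕ) :
    InGenL n S ((m+1) • u) := by
  induction m with
  | zero => rw [show (0+1 : ℕ) = 1 from rfl, one_smul]; exact hu
  | succ m ih =>
    rw [show (m+1+1 : ℕ) = (m+1)+1 from rfl, succ_nsmul]
    exact add_mem' ih hu

theorem neg_mem' {u : Fin n → ZMod 12} (hu : InGenL n S u) : InGenL n S (-u) := by
  have h := nsmul_mem' hu 10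
  have he : ((11 : ℕ) • u) = -u := by
    funext j
    show (11:ℕ) • u j = -(u j)
    rw [nsmul_eq_mul]
    push_cast
    revert j
    intro j
    generalize u j = x
    revert x
    decide
  rwa [he] at h

end loopside

/-! ### More scalar facts -/

def pi2 : ZMod 12 →+* ZMod 2 := ZMod.castHom (show (2:ℕ) ∣ 12 by norm_num) (ZMod 2)
def rho : ZMod 4 →+* ZMod 2 := ZMod.castHom (show (2:ℕ) ∣ 4 by norm_num) (ZMod 2)

theorem rho_pi4 : ∀ x : ZMod 12, rho (pi4 x) = pi2 x := by decide
theorem odd4_rho : ∀ y : ZMod 4, (y = 1 ∨ y = 3) ↔ rho y = 1 := by decide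
theorem pi2_even : ∀ x : ZMod 12, ¬(pi4 x = 1 ∨ pi4 x = 3) → pi2 x = 0 := by decide
theorem t3 : ∀ x y : ZMod 12, 3 * t x y = 0 := by decide
theorem t_ne_zero : ∀ x y : ZMod 12, t x y ≠ 0 → (pi4 x = 1 ∨ pi4 x = 3) := by decide
theorem three_mul_cases : ∀ x : ZMod 12, 3 * x = 0 → x ≠ 0 → x = 4 ∨ x = 8 := by decide
theorem pfun_neg : ∀ a b : ZMod 4, pfun (-a) (-b) = pfun a b := by decide

theorem t_eq_pfun (x y : ZMod 12) : t x y = pfun (pi4 x) (pi4 y) := by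
  unfold t pfun Pc
  exact if_congr Iff.rfl rfl rfl

/-! ### Definitions depending on the generators -/

def REL (n k : ℕ) (a : Fin k → Fin n → ZMod 12) (j j' : Fin n) : Prop :=
  (∀ s, pi4 (a s j) = pi4 (a s j')) ∨ (∀ s, pi4 (a s j) = -pi4 (a s j'))

theorem REL_refl (n k : ℕ) (a : Fin k → Fin n → ZMod 12) (j : Fin n) : REL n k a j j :=
  Or.inl fun _ => rfl

theorem REL_symm {n k : ℕ} {a : Fin k → Fin n → ZMod 12} {j j' : Fin n}
    (h : REL n k a j j') : REL n k a j' j := by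
  rcases h with h | h
  · exact Or.inl fun s => (h s).symm
  · exact Or.inr fun s => by rw [h s, neg_neg]

theorem REL_trans {n k : ℕ} {a : Fin k → Fin n → ZMod 12} {j j' j'' : Fin n}
    (h : REL n k a j j') (h' : REL n k a j' j'') : REL n k a j j'' := by
  rcases h with h | h <;> rcases h' with h' | h'
  · exact Or.inl fun s => by rw [h s, h' s]
  · exact Or.inr fun s => by rw [h s, h' s]
  · exact Or.inr fun s => by rw [h s, h' s]
  · exact Or.inl fun s => by rw [h s, h' s, neg_neg]

open scoped Classical in
noncomputable def bvec (n k : ℕ) (a : Fin k → Fin n → ZMod 12) (i : Fin n) :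
    Fin n → ZMod 12 :=
  fun j =>
    if (∀ s, a s j - a s i ∈ ({0, 4, 8} : Set (ZMod 12))) ∨
       (∀ s, a s j + a s i ∈ ({0, 4, 8} : Set (ZMod 12)))
    then (4 : ZMod 12) else 0

open scoped Classical in
noncomputable def genSet (n k : ℕ) (a : Fin k → Fin n → ZMod 12) : Set (Fin n → ZMod 12) :=
  Set.range a ∪
    { v | ∃ i : Fin n, (∃ s : Fin k, Odd (a s i)) ∧
        v = fun j =>
          if (∀ s, a s j - a s i ∈ ({0, 4, 8} : Set (ZMod 12))) ∨
             (∀ s, a s j + a s i ∈ ({0, 4, 8} : Set (ZMod 12)))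
          then (4 : ZMod 12) else 0 }

open scoped Classical in
theorem bvec_eq (n k : ℕ) (a : Fin k → Fin n → ZMod 12) (i j : Fin n) :
    bvec n k a i j = if REL n k a j i then (4 : ZMod 12) else 0 := by
  have hiff : ((∀ s, a s j - a s i ∈ ({0, 4, 8} : Set (ZMod 12))) ∨
      (∀ s, a s j + a s i ∈ ({0, 4, 8} : Set (ZMod 12)))) ↔ REL n k a j i := by
    unfold REL
    refine or_congr ?_ ?_
    · exact forall_congr' fun s => by
        rw [mem048_iff, map_sub, sub_eq_zero]
    · exact forall_congr' fun s => by
        rw [mem048_iff, map_add, add_eq_zero_iff_eq_neg]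
  unfold bvec
  by_cases h : REL n k a j i
  · rw [if_pos (hiff.mpr h), if_pos h]
  · rw [if_neg (fun hc => h (hiff.mp hc)), if_neg h]

/-! ### Realization of arbitrary mod-4 combinations -/

theorem realize (n k : ℕ) (a : Fin k → Fin n → ZMod 12) (hk : 1 ≤ k) (l : Fin k → ZMod 4) :
    ∃ u, InGenL n (Set.range a) u ∧ ∀ j, pi4 (u j) = ∑ s, l s * pi4 (a s j) := by
  have single : ∀ s : Fin k, ∃ u, InGenL n (Set.range a) u ∧
      ∀ j, pi4 (u j) = l s * pi4 (a s j) := by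
    intro s
    refine ⟨fun j => pw (11 + (l s).val) (a s j), pw_mem (InGenL.base (Set.mem_range_self s)) _, fun j => ?_⟩
    rw [pi4_pw]
    congr 1
    have h12 : ((12 : ℕ) : ZMod 4) = 0 := by decide
    have : (11 + (l s).val + 1 : ℕ) = 12 + (l s).val := by omega
    rw [this, Nat.cast_add, h12, zero_add, ZMod.natCast_rightInverse (l s)]
  have key : ∀ F : Finset (Fin k), F.Nonempty → ∃ u, InGenL n (Set.range a) u ∧
      ∀ j, pi4 (u j) = ∑ s ∈ F, l s * pi4 (a s j) := by
    intro F hF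
    induction hF using Finset.Nonempty.cons_induction with
    | singleton s =>
      obtain ⟨u, hu, hu2⟩ := single s
      exact ⟨u, hu, fun j => by rw [Finset.sum_singleton]; exact hu2 j⟩
    | cons s F hns hF ih =>
      obtain ⟨u1, hu1, hu12⟩ := ih
      obtain ⟨u0, hu0, hu02⟩ := single s
      refine ⟨fun j => mulL (u0 j) (u1 j), InGenL.mul hu0 hu1, fun j => ?_⟩
      rw [pi4_mulL, Finset.sum_cons, hu02 j, hu12 j]
  have huniv : (Finset.univ : Finset (Fin k)).Nonempty := ⟨⟨0, hk⟩, Finset.mem_univ _⟩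
  exact key Finset.univ huniv

/-! ### Class-closed `{0,4,8}`-vectors lie in the closure of the b's -/

theorem KsubB (n k : ℕ) (a : Fin k → Fin n → ZMod 12) :
    ∀ m : ℕ, ∀ w : Fin n → ZMod 12,
      (Finset.univ.filter (fun j => w j ≠ 0)).card = m →
      (∀ j, 3 * w j = 0) →
      (∀ j, w j ≠ 0 → ∃ s, Odd (a s j)) →
      (∀ j j', REL n k a j j' → w j = w j') →
      w ∈ AddSubgroup.closure (genSet n k a) := by
  intro m
  induction m using Nat.strong_induction_on with
  | _ m IH =>
  intro w hcard h1 h2 h3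
  rcases Finset.eq_empty_or_nonempty (Finset.univ.filter (fun j => w j ≠ 0)) with he | hne
  · have hw : w = 0 := funext fun j => by
      by_contra hj
      have hmem : j ∈ Finset.univ.filter (fun j => w j ≠ 0) :=
        Finset.mem_filter.mpr ⟨Finset.mem_univ j, hj⟩
      rw [he] at hmem
      exact absurd hmem (Finset.notMem_empty j)
    rw [hw]
    exact AddSubgroup.zero_mem _
  · obtain ⟨j₀, hj₀⟩ := hne
    have hw0 : w j₀ ≠ 0 := (Finset.mem_filter.mp hj₀).2
    have hbmem : bvec n k a j₀ ∈ genSet n k a := Or.inr ⟨j₀, h2 j₀ hw0, rfl⟩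
    have hcases : w j₀ = 4 ∨ w j₀ = 8 := three_mul_cases _ (h1 j₀) hw0
    set coef : ℕ := if w j₀ = (4:ZMod 12) then 1 else 2 with hcoefdef
    have hcoef : coef • (4:ZMod 12) = w j₀ := by
      rcases hcases with h | h
      · rw [hcoefdef, if_pos h, one_smul, h]
      · have hne4 : w j₀ ≠ 4 := by rw [h]; decide
        rw [hcoefdef, if_neg hne4, h]
        decide
    set b := bvec n k a j₀ with hbdef
    have hb4 : ∀ j, (REL n k a j j₀ → b j = 4) ∧ (¬ REL n k a j j₀ → b j = 0) := fun j => by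
      rw [hbdef, bvec_eq]
      exact ⟨fun h => if_pos h, fun h => if_neg h⟩
    set w' := w - coef • b with hw'def
    have hsuppR : ∀ j, REL n k a j j₀ → w' j = 0 := by
      intro j hrel
      have : w' j = w j - coef • b j := rfl
      rw [this, (hb4 j).1 hrel, h3 j j₀ hrel, hcoef, sub_self]
    have hsuppN : ∀ j, ¬ REL n k a j j₀ → w' j = w j := by
      intro j hrel
      have : w' j = w j - coef • b j := rfl
      rw [this, (hb4 j).2 hrel, smul_zero, sub_zero]
    have hsub : Finset.univ.filter (fun j => w' j ≠ 0) ⊆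
        (Finset.univ.filter (fun j => w j ≠ 0)).erase j₀ := by
      intro j hj
      have hj' : w' j ≠ 0 := (Finset.mem_filter.mp hj).2
      have hnrel : ¬ REL n k a j j₀ := fun h => hj' (hsuppR j h)
      refine Finset.mem_erase.mpr ⟨?_, Finset.mem_filter.mpr ⟨Finset.mem_univ _, ?_⟩⟩
      · rintro rfl
        exact hnrel (REL_refl n k a j)
      · rw [← hsuppN j hnrel]
        exact hj'
    have hlt : (Finset.univ.filter (fun j => w' j ≠ 0)).card < m := by
      calc (Finset.univ.filter (fun j => w' j ≠ 0)).card
          ≤ ((Finset.univ.filter (fun j => w j ≠ 0)).erase j₀).card := Finset.card_le_card hsub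
        _ < (Finset.univ.filter (fun j => w j ≠ 0)).card := Finset.card_erase_lt_of_mem hj₀
        _ = m := hcard
    have hb3 : ∀ j, 3 * b j = 0 := by
      intro j
      by_cases h : REL n k a j j₀
      · rw [(hb4 j).1 h]; decide
      · rw [(hb4 j).2 h, mul_zero]
    have hw'mem : w' ∈ AddSubgroup.closure (genSet n k a) := by
      refine IH _ hlt w' rfl ?_ ?_ ?_
      · intro j
        have : w' j = w j - coef • b j := rfl
        rw [this, mul_sub, h1 j, mul_smul_comm, hb3 j, smul_zero, sub_zero]
      · intro j hj
        have hnrel : ¬ REL n k a j j₀ := fun h => hj (hsuppR j h)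
        rw [hsuppN j hnrel] at hj
        exact h2 j hj
      · intro j j' hrel
        by_cases hrel0 : REL n k a j j₀
        · rw [hsuppR j hrel0, hsuppR j' (REL_trans (REL_symm hrel) hrel0)]
        · have hrel0' : ¬ REL n k a j' j₀ := fun h => hrel0 (REL_trans hrel h)
          rw [hsuppN j hrel0, hsuppN j' hrel0', h3 j j' hrel]
    have hfin : w = w' + coef • b := by rw [hw'def, sub_add_cancel]
    rw [hfin]
    exact AddSubgroup.add_mem _ hw'mem
      (AddSubgroup.nsmul_mem _ (AddSubgroup.subset_closure hbmem) coef)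

/-! ### Direction 1: the loop closure is contained in the additive closure -/

theorem tvec_in_closure (n k : ℕ) (a : Fin k → Fin n → ZMod 12)
    (u v : Fin n → ZMod 12) (l m : Fin k → ZMod 4)
    (hl : ∀ j, pi4 (u j) = ∑ s, l s * pi4 (a s j))
    (hm : ∀ j, pi4 (v j) = ∑ s, m s * pi4 (a s j)) :
    tvec u v ∈ AddSubgroup.closure (genSet n k a) := by
  apply KsubB n k a _ (tvec u v) rfl
  · intro j
    exact t3 _ _
  · intro j hne
    have hodd : pi4 (u j) = 1 ∨ pi4 (u j) = 3 := t_ne_zero _ _ hne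
    by_contra hcon
    push_neg at hcon
    have hzero : ∀ s, pi2 (a s j) = 0 := by
      intro s
      apply pi2_even
      intro hx
      exact hcon s ((odd_iff_pi4 (a s j)).mpr hx)
    have h1 : rho (pi4 (u j)) = 1 := (odd4_rho _).mp hodd
    rw [hl j, map_sum] at h1
    have h0 : ∀ s ∈ Finset.univ, rho (l s * pi4 (a s j)) = 0 := by
      intro s _
      rw [map_mul, rho_pi4, hzero s, mul_zero]
    rw [Finset.sum_congr rfl h0, Finset.sum_const_zero] at h1
    exact absurd h1 (by decide)
  · intro j j' hrel
    show t (u j) (v j) = t (u j') (v j')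
    rcases hrel with h | h
    · have hu : pi4 (u j) = pi4 (u j') := by
        rw [hl j, hl j']
        exact Finset.sum_congr rfl fun s _ => by rw [h s]
      have hv : pi4 (v j) = pi4 (v j') := by
        rw [hm j, hm j']
        exact Finset.sum_congr rfl fun s _ => by rw [h s]
      unfold t
      rw [hu, hv]
    · have hu : pi4 (u j) = -pi4 (u j') := by
        rw [hl j, hl j', ← Finset.sum_neg_distrib]
        exact Finset.sum_congr rfl fun s _ => by rw [h s, mul_neg]
      have hv : pi4 (v j) = -pi4 (v j') := by
        rw [hm j, hm j', ← Finset.sum_neg_distrib]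
        exact Finset.sum_congr rfl fun s _ => by rw [h s, mul_neg]
      rw [t_eq_pfun, t_eq_pfun, hu, hv, pfun_neg]

theorem dir1 (n k : ℕ) (a : Fin k → Fin n → ZMod 12) :
    ∀ v, InGenL n (Set.range a) v →
      v ∈ AddSubgroup.closure (genSet n k a) ∧
        ∃ l : Fin k → ZMod 4, ∀ j, pi4 (v j) = ∑ s, l s * pi4 (a s j) := by
  intro v hv
  induction hv with
  | base h =>
    constructor
    · exact AddSubgroup.subset_closure (Or.inl h)
    · obtain ⟨s, rfl⟩ := h
      refine ⟨Pi.single s 1, fun j => ?_⟩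
      have := dot_single s 1 (fun s' => pi4 (a s' j))
      unfold dot at this
      rw [this, one_mul]
  | @mul u v hu hv ihu ihv =>
    obtain ⟨hucl, lu, hlu⟩ := ihu
    obtain ⟨hvcl, lv, hlv⟩ := ihv
    constructor
    · have he : (fun j => mulL (u j) (v j)) = u + v + tvec u v := rfl
      rw [he]
      exact AddSubgroup.add_mem _ (AddSubgroup.add_mem _ hucl hvcl)
        (tvec_in_closure n k a u v lu lv hlu hlv)
    · refine ⟨lu + lv, fun j => ?_⟩
      show pi4 (mulL (u j) (v j)) = _
      rw [pi4_mulL, hlu j, hlv j, ← Finset.sum_add_distrib]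
      exact Finset.sum_congr rfl fun s _ => by
        show lu s * _ + lv s * _ = (lu s + lv s) * _
        ring

/-! ### Direction 2: every generator `b_i` lies in the loop closure -/

theorem bvec_mem (n k : ℕ) (hk : 1 ≤ k) (a : Fin k → Fin n → ZMod 12)
    (i : Fin n) (hodd : ∃ s, Odd (a s i)) :
    InGenL n (Set.range a) (bvec n k a i) := by
  classical
  have hreal := realize n k a hk
  choose uch hu1 hu2 using hreal
  set c : Fin k → ZMod 4 := fun s => pi4 (a s i) with hc
  have hbase : InGenL n (Set.range a) (a ⟨0, hk⟩) := InGenL.base (Set.mem_range_self _)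
  set bs : Fin n → ZMod 12 :=
    ∑ l : Fin k → ZMod 4, ∑ m : Fin k → ZMod 4,
      wt (dot l c) (dot m c) • tvec (uch l) (uch m) with hbs
  have hbsW : memW n (Set.range a) bs := by
    rw [hbs]
    apply Finset.sum_induction _ _ (fun x y hx hy => memW_add hx hy) (memW_zero hbase)
    intro l _
    apply Finset.sum_induction _ _ (fun x y hx hy => memW_add hx hy) (memW_zero hbase)
    intro m _
    exact memW_nsmul (memW_tvec (hu1 l) (hu1 m)) _
  have hcodd : ∃ s, c s = 1 ∨ c s = 3 := by
    obtain ⟨s, hs⟩ := hodd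
    exact ⟨s, (odd_iff_pi4 _).mp hs⟩
  have heq : bs = bvec n k a i := by
    funext j
    set d : Fin k → ZMod 4 := fun s => pi4 (a s j) with hd
    have hL : bs j = ∑ l : Fin k → ZMod 4, ∑ m : Fin k → ZMod 4,
        g (dot l c, dot l d) (dot m c, dot m d) := by
      rw [hbs, Finset.sum_apply]
      refine Finset.sum_congr rfl fun l _ => ?_
      rw [Finset.sum_apply]
      refine Finset.sum_congr rfl fun m _ => ?_
      show (wt (dot l c) (dot m c) • tvec (uch l) (uch m)) j = _
      rw [Pi.smul_apply]
      show wt (dot l c) (dot m c) • t (uch l j) (uch m j) = _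
      rw [t_eq_pfun]
      have h1 : pi4 (uch l j) = dot l d := (hu2 l j).trans rfl
      have h2 : pi4 (uch m j) = dot m d := (hu2 m j).trans rfl
      rw [h1, h2]
      rfl
    rw [hL, scalar_id c d hcodd, bvec_eq]
    have hcond : (d = c ∨ d = -c) ↔ REL n k a j i := by
      unfold REL
      refine or_congr ?_ ?_
      · exact funext_iff
      · exact funext_iff.trans (forall_congr' fun s => Iff.rfl)
    by_cases h : REL n k a j i
    · rw [if_pos (hcond.mpr h), if_pos h]
    · rw [if_neg (fun hc' => h (hcond.mp hc')), if_neg h]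
  rw [← heq]
  exact hbsW.1

/-! ### The main theorem -/

open scoped Classical in
theorem stmt_14 (n k : ℕ) (hn : 1 ≤ n) (hk : 1 ≤ k)
    (a : Fin k → (Fin n → ZMod 12)) :
    { v | InGenL n (Set.range a) v } =
      ↑(AddSubgroup.closure
        (Set.range a ∪
          { v | ∃ i : Fin n, (∃ s : Fin k, Odd (a s i)) ∧
              v = fun j =>
                if (∀ s, a s j - a s i ∈ ({0, 4, 8} : Set (ZMod 12))) ∨
                   (∀ s, a s j + a s i ∈ ({0, 4, 8} : Set (ZMod 12)))
                then (4 : ZMod 12) else 0 })) := by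
  have hbase : InGenL n (Set.range a) (a ⟨0, hk⟩) := InGenL.base (Set.mem_range_self _)
  apply Set.Subset.antisymm
  · intro v hv
    exact (dir1 n k a v hv).1
  · intro v hv
    let CGrp : AddSubgroup (Fin n → ZMod 12) :=
      { carrier := { v | InGenL n (Set.range a) v }
        zero_mem' := zero_mem' hbase
        add_mem' := fun h1 h2 => add_mem' h1 h2
        neg_mem' := fun h => neg_mem' h }
    have hsub : AddSubgroup.closure (genSet n k a) ≤ CGrp := by
      rw [AddSubgroup.closure_le]
      rintro v (⟨s, rfl⟩ | ⟨i, hoddi, rfl⟩)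
      · exact InGenL.base (Set.mem_range_self s)
      · exact bvec_mem n k hk a i hoddi
    exact hsub hv
end
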